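/- For every n ≥ 0 and every lattice path P = p_1…p_{2n+2} ∈ P_n, the filling φ(P) of θ^(n) defined as follows is a standard Young tableau of shape θ^(n): place 1 in the cell (0,0); for each i with p_i = E, place i+2 in the arm; for each i with p_i = N, place i+2 in the leg; for the unique index j whose step p_j is backwards (S or W), place j+2 in the heart; and place 2 in the arm if p_j = S and in the leg if p_j = W (in each of the arm and the leg, the assigned values are arranged in increasing order along the row, respectively down the column). Moreover φ is a two-sided inverse of the map ψ, where ψ(T) = p_1…p_{2n+2} is given by p_i = E if the entry i+2 of T lies in the arm, p_i = N if i+2 lies in the leg, p_i = S if i+2 lies in the heart and 2 lies in the arm, and p_i = W if i+2 lies in the heart and 2 lies in the leg. -/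

import Mathlib

/-- The four unit steps of a lattice path. -/
inductive Step : Type
  | N | S | E | W
  deriving DecidableEq

/-- The vector in `ℤ × ℤ` corresponding to a step. -/
def stepVec : Step → ℤ × ℤ
  | Step.N => (0, 1)
  | Step.S => (0, -1)
  | Step.E => (1, 0)
  | Step.W => (-1, 0)

/-- The endpoint of the lattice path described by the word `w`, starting at the origin. -/
def endpt (w : List Step) : ℤ × ℤ := (w.map stepVec).sum

/-- `w` is a lattice path in `𝒫ₙ`: it has length `2n+2`, stays weakly in the first
quadrant, and ends at `(n, n)`. -/
def IsPath (n : ℕ) (w : List Step) : Prop :=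
  w.length = 2 * n + 2 ∧
  (∀ k : ℕ, 0 ≤ (endpt (w.take k)).1 ∧ 0 ≤ (endpt (w.take k)).2) ∧
  endpt w = ((n : ℤ), (n : ℤ))

/-- The cells of the Young diagram of `θ⁽ⁿ⁾ = (n+2, 2, 1ⁿ)`, in (row, column) matrix
coordinates, 0-indexed, English orientation. -/
def cells (n : ℕ) : Set (ℕ × ℕ) :=
  {c | (c.1 = 0 ∧ c.2 ≤ n + 1) ∨ c = (1, 1) ∨ (c.2 = 0 ∧ 1 ≤ c.1 ∧ c.1 ≤ n + 1)}

/-- `T` is a standard Young tableau of shape `θ⁽ⁿ⁾`: it is a bijective filling of the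
cells with `1, …, 2n+4` (and `0` elsewhere), strictly increasing along rows and
down columns. -/
def IsSYT (n : ℕ) (T : ℕ × ℕ → ℕ) : Prop :=
  (∀ c, c ∉ cells n → T c = 0) ∧
  Set.BijOn T (cells n) (Set.Icc 1 (2 * n + 4)) ∧
  (∀ c ∈ cells n, ∀ d ∈ cells n, c.1 = d.1 → c.2 < d.2 → T c < T d) ∧
  (∀ c ∈ cells n, ∀ d ∈ cells n, c.2 = d.2 → c.1 < d.1 → T c < T d)

/-- The value `m` appears in the arm (first row) of `T`. -/
def InArm (n : ℕ) (T : ℕ × ℕ → ℕ) (m : ℕ) : Prop := ∃ j ≤ n + 1, T (0, j) = m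

/-- The value `m` appears in the leg (first column) of `T`. -/
def InLeg (n : ℕ) (T : ℕ × ℕ → ℕ) (m : ℕ) : Prop := ∃ i ≤ n + 1, T (i, 0) = m

/-- The value `m` appears in the heart (the cell `(1,1)`) of `T`. -/
def InHeart (T : ℕ × ℕ → ℕ) (m : ℕ) : Prop := T (1, 1) = m

open Classical in
/-- The map ψ: the `i`-th letter (1-based, `i = k+1` for `k : Fin (2n+2)`) is determined by
the position of the entry `i+2` of `T`, and, if `i+2` is in the heart, by the position of `2`. -/
noncomputable def psi (n : ℕ) (T : ℕ × ℕ → ℕ) : List Step :=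
  List.ofFn (fun k : Fin (2 * n + 2) =>
    if InArm n T (k.val + 3) then Step.E
    else if InLeg n T (k.val + 3) then Step.N
    else if InHeart T (k.val + 3) ∧ InArm n T 2 then Step.S
    else Step.W)

/-- The 1-based index of the unique backwards step (`S` or `W`) of `w` (or `0` if none). -/
def backIdx (w : List Step) : ℕ :=
  match w.findIdx? (fun s => s == Step.S || s == Step.W) with
  | some k => k + 1
  | none => 0

/-- The values placed in the arm of `φ(w)`: the value `1`, the value `2` if the backwards
step of `w` is `S`, and `i+2` for each (1-based) index `i` with `pᵢ = E`. -/
def armVals (n : ℕ) (w : List Step) : Finset ℕ :=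
  insert 1 ((if Step.S ∈ w then {2} else ∅) ∪
    ((Finset.Icc 1 (2 * n + 2)).filter (fun i => w.getD (i - 1) Step.N = Step.E)).image
      (fun i => i + 2))

/-- The values placed in the leg of `φ(w)`: the value `1`, the value `2` if the backwards
step of `w` is `W`, and `i+2` for each (1-based) index `i` with `pᵢ = N`. -/
def legVals (n : ℕ) (w : List Step) : Finset ℕ :=
  insert 1 ((if Step.W ∈ w then {2} else ∅) ∪
    ((Finset.Icc 1 (2 * n + 2)).filter (fun i => w.getD (i - 1) Step.E = Step.N)).image
      (fun i => i + 2))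

/-- The map φ: place `j+2` in the heart where `p_j` is the backwards step, and fill the arm
(resp. leg) with `armVals` (resp. `legVals`) in increasing order along the row
(resp. down the column). -/
def phi (n : ℕ) (w : List Step) : ℕ × ℕ → ℕ := fun c =>
  if c = (1, 1) then backIdx w + 2
  else if c.1 = 0 ∧ c.2 ≤ n + 1 then ((armVals n w).sort (· ≤ ·)).getD c.2 0
  else if c.2 = 0 ∧ 1 ≤ c.1 ∧ c.1 ≤ n + 1 then ((legVals n w).sort (· ≤ ·)).getD c.1 0
  else 0


/-!
A filling of `θ⁽ⁿ⁾` is determined by its arm entries `A`, its leg entries `L` (both containing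
the corner entry `1`) and its heart entry `h`, and it is a standard Young tableau as soon as
`|A| = |L| = n + 2`, `A ∪ L ∪ {h} = {1, …, 2n+4}` with `A ∩ L = {1}`, and `h` exceeds the second
smallest elements of `A` and of `L`.

For a path in `𝒫ₙ` the endpoint gives `#E - #W = #N - #S = n`, and the length `2n + 2` then
forces exactly one backwards step. So `φ(w)` has `n + 2` entries in the arm and in the leg, and
the quadrant condition supplies an `N` before an `S` (an `E` before a `W`), i.e. a leg (arm) entry
between `1` and the heart. Conversely `ψ(T)` records exactly `A`, `L` and `h`, from which `T` is
recovered by sorting; so `φ ∘ ψ = id`, and `ψ ∘ φ = id` is checked letter by letter.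
-/

namespace Finset

variable {α : Type*} [LinearOrder α] {s : Finset α} {d : α} {i j : ℕ}

theorem getD_sort_mem (hi : i < s.card) : s.sort.getD i d ∈ s := by
  rw [List.getD_eq_getElem _ _ (by rwa [length_sort])]
  exact (mem_sort _).1 (List.getElem_mem _)

theorem getD_sort_lt_getD_sort (hij : i < j) (hj : j < s.card) :
    s.sort.getD i d < s.sort.getD j d := by
  rw [List.getD_eq_getElem _ _ (by rw [length_sort]; omega),
    List.getD_eq_getElem _ _ (by rwa [length_sort])]
  exact (sortedLT_sort s).getElem_lt_getElem_of_lt hij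

theorem getD_sort_le_getD_sort (hij : i ≤ j) (hj : j < s.card) :
    s.sort.getD i d ≤ s.sort.getD j d := by
  rcases hij.lt_or_eq with hij | rfl
  · exact (getD_sort_lt_getD_sort hij hj).le
  · rfl

theorem eq_of_getD_sort_eq (hi : i < s.card) (hj : j < s.card)
    (h : s.sort.getD i d = s.sort.getD j d) : i = j := by
  by_contra hne
  rcases Nat.lt_or_gt_of_ne hne with hij | hji
  · exact (getD_sort_lt_getD_sort hij hj).ne h
  · exact (getD_sort_lt_getD_sort hji hi).ne' h

theorem exists_getD_sort_eq {x : α} (hx : x ∈ s) : ∃ i < s.card, s.sort.getD i d = x := by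
  obtain ⟨i, hi, rfl⟩ := List.mem_iff_getElem.1 ((mem_sort (· ≤ ·)).2 hx)
  exact ⟨i, by rwa [length_sort] at hi, List.getD_eq_getElem _ _ hi⟩

theorem getD_sort_zero_eq {x : α} (hx : x ∈ s) (hmin : ∀ y ∈ s, x ≤ y) :
    s.sort.getD 0 d = x := by
  obtain ⟨i, hi, rfl⟩ := exists_getD_sort_eq (d := d) hx
  exact le_antisymm (getD_sort_le_getD_sort i.zero_le hi) (hmin _ (getD_sort_mem (by omega)))

theorem getD_sort_one_le {x : α} (hx : x ∈ s) (hne : x ≠ s.sort.getD 0 d) :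
    s.sort.getD 1 d ≤ x := by
  obtain ⟨i, hi, rfl⟩ := exists_getD_sort_eq (d := d) hx
  have : i ≠ 0 := by rintro rfl; exact hne rfl
  exact getD_sort_le_getD_sort (by omega) hi

theorem getD_sort_eq_of_strictMono {k : ℕ} {f : Fin k → α} (hf : StrictMono f)
    (hfs : ∀ i, f i ∈ s) (hs : s.card = k) (i : Fin k) : s.sort.getD i d = f i := by
  rw [orderEmbOfFin_unique hs hfs hf, orderEmbOfFin_apply,
    List.getD_eq_getElem _ _ (by rw [length_sort, hs]; exact i.isLt)]
  rfl

end Finset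

namespace List

variable {α : Type*} [DecidableEq α]

theorem card_filter_range_getD_eq_count (l : List α) (a d : α) :
    ((Finset.range l.length).filter (l.getD · d = a)).card = l.count a := by
  induction l with
  | nil => simp
  | cons b l ih =>
    rw [Finset.card_filter, length_cons, Finset.sum_range_succ', count_cons, ← ih,
      Finset.card_filter]
    simp [beq_iff_eq]

theorem card_filter_Icc_getD_sub_one_eq_count (l : List α) (a d : α) :
    ((Finset.Icc 1 l.length).filter (fun i => l.getD (i - 1) d = a)).card = l.count a := by
  rw [← card_filter_range_getD_eq_count l a d]
  refine Finset.card_nbij' (· - 1) (· + 1) ?_ ?_ ?_ ?_ <;> intro i <;> simp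
  · exact fun h1 h2 h => ⟨by omega, h⟩
  · omega

theorem exists_lt_getElem_eq_of_count_take_le {l : List α} {k : ℕ} (hk : k < l.length) {a : α}
    (ha : l[k] ≠ a) (hcount : (l.take (k + 1)).count l[k] ≤ (l.take (k + 1)).count a) :
    ∃ i, ∃ hi : i < k, l[i] = a := by
  have hmem : l[k] ∈ l.take (k + 1) := mem_iff_getElem.2 ⟨k, by simp; omega, by simp⟩
  have hpos := (count_pos_iff.2 hmem).trans_le hcount
  obtain ⟨i, hi, rfl⟩ := mem_iff_getElem.1 (count_pos_iff.1 hpos)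
  have hik : i ≠ k := fun h => ha (by subst h; simp)
  simp only [length_take, getElem_take] at hi ⊢
  exact ⟨i, by omega, rfl⟩

end List

theorem mem_cells_iff {n : ℕ} {c : ℕ × ℕ} : c ∈ cells n ↔
    (∃ j ≤ n + 1, c = (0, j)) ∨ c = (1, 1) ∨ ∃ i, 1 ≤ i ∧ i ≤ n + 1 ∧ c = (i, 0) := by
  obtain ⟨i, j⟩ := c
  simp [cells, and_comm, and_assoc]

theorem arm_mem_cells {n j : ℕ} (hj : j ≤ n + 1) : (0, j) ∈ cells n := Or.inl ⟨rfl, hj⟩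

theorem leg_mem_cells {n i : ℕ} (hi : i ≤ n + 1) : (i, 0) ∈ cells n := by
  rcases Nat.eq_zero_or_pos i with rfl | hi1
  exacts [arm_mem_cells (Nat.zero_le _), Or.inr (Or.inr ⟨rfl, hi1, hi⟩)]

def fill (n : ℕ) (A L : Finset ℕ) (h : ℕ) : ℕ × ℕ → ℕ := fun c =>
  if c = (1, 1) then h
  else if c.1 = 0 ∧ c.2 ≤ n + 1 then (A.sort (· ≤ ·)).getD c.2 0
  else if c.2 = 0 ∧ 1 ≤ c.1 ∧ c.1 ≤ n + 1 then (L.sort (· ≤ ·)).getD c.1 0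
  else 0

theorem phi_eq_fill (n : ℕ) (w : List Step) :
    phi n w = fill n (armVals n w) (legVals n w) (backIdx w + 2) := rfl

section Fill

variable {n h i j : ℕ} {A L : Finset ℕ}

theorem fill_arm (hj : j ≤ n + 1) : fill n A L h (0, j) = A.sort.getD j 0 := by
  simp [fill, hj]

theorem fill_heart : fill n A L h (1, 1) = h := if_pos rfl

theorem fill_leg (hi1 : 1 ≤ i) (hi : i ≤ n + 1) : fill n A L h (i, 0) = L.sort.getD i 0 := by
  simp [fill, hi, Nat.one_le_iff_ne_zero.1 hi1, hi1]

theorem fill_of_notMem_cells {c : ℕ × ℕ} (hc : c ∉ cells n) : fill n A L h c = 0 := by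
  simp only [cells, Set.mem_ofPred_eq, not_or] at hc
  simp [fill, hc]

end Fill

/-- The arm entries `A`, the leg entries `L` (both including the corner entry `1`) and the heart
entry `h` of a standard Young tableau of shape `θ⁽ⁿ⁾`. -/
structure IsThetaData (n : ℕ) (A L : Finset ℕ) (h : ℕ) : Prop where
  card_arm : A.card = n + 2
  card_leg : L.card = n + 2
  one_mem_arm : 1 ∈ A
  one_mem_leg : 1 ∈ L
  cover : ∀ m, 1 ≤ m ∧ m ≤ 2 * n + 4 ↔ m ∈ A ∨ m ∈ L ∨ m = h
  eq_one_of_mem_arm_of_mem_leg : ∀ m ∈ A, m ∈ L → m = 1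
  heart_notMem_arm : h ∉ A
  heart_notMem_leg : h ∉ L
  exists_arm_lt_heart : ∃ x ∈ A, 1 < x ∧ x < h
  exists_leg_lt_heart : ∃ y ∈ L, 1 < y ∧ y < h

namespace IsThetaData

variable {n h i j m : ℕ} {A L : Finset ℕ}

theorem arm_mem (hD : IsThetaData n A L h) (hj : j ≤ n + 1) : A.sort.getD j 0 ∈ A :=
  Finset.getD_sort_mem (by rw [hD.card_arm]; omega)

theorem leg_mem (hD : IsThetaData n A L h) (hi : i ≤ n + 1) : L.sort.getD i 0 ∈ L :=
  Finset.getD_sort_mem (by rw [hD.card_leg]; omega)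

theorem arm_lt (hD : IsThetaData n A L h) (hij : i < j) (hj : j ≤ n + 1) :
    A.sort.getD i 0 < A.sort.getD j 0 :=
  Finset.getD_sort_lt_getD_sort hij (by rw [hD.card_arm]; omega)

theorem leg_lt (hD : IsThetaData n A L h) (hij : i < j) (hj : j ≤ n + 1) :
    L.sort.getD i 0 < L.sort.getD j 0 :=
  Finset.getD_sort_lt_getD_sort hij (by rw [hD.card_leg]; omega)

theorem arm_zero (hD : IsThetaData n A L h) : A.sort.getD 0 0 = 1 :=
  Finset.getD_sort_zero_eq hD.one_mem_arm fun y hy => ((hD.cover y).2 (.inl hy)).1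

theorem leg_zero (hD : IsThetaData n A L h) : L.sort.getD 0 0 = 1 :=
  Finset.getD_sort_zero_eq hD.one_mem_leg fun y hy => ((hD.cover y).2 (.inr (.inl hy))).1

theorem arm_one_lt_heart (hD : IsThetaData n A L h) : A.sort.getD 1 0 < h := by
  obtain ⟨x, hx, hx1, hxh⟩ := hD.exists_arm_lt_heart
  exact (Finset.getD_sort_one_le hx (by rw [hD.arm_zero]; omega)).trans_lt hxh

theorem leg_one_lt_heart (hD : IsThetaData n A L h) : L.sort.getD 1 0 < h := by
  obtain ⟨y, hy, hy1, hyh⟩ := hD.exists_leg_lt_heart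
  exact (Finset.getD_sort_one_le hy (by rw [hD.leg_zero]; omega)).trans_lt hyh

theorem arm_ne_leg (hD : IsThetaData n A L h) (hj : j ≤ n + 1) (hi1 : 1 ≤ i) (hi : i ≤ n + 1) :
    A.sort.getD j 0 ≠ L.sort.getD i 0 := by
  intro he
  have h1 := hD.eq_one_of_mem_arm_of_mem_leg _ (hD.arm_mem hj) (he ▸ hD.leg_mem hi)
  rw [he, ← hD.leg_zero] at h1
  have := Finset.eq_of_getD_sort_eq (by rw [hD.card_leg]; omega) (by rw [hD.card_leg]; omega) h1
  omega

theorem inArm_fill_iff (hD : IsThetaData n A L h) : InArm n (fill n A L h) m ↔ m ∈ A := by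
  constructor
  · rintro ⟨j, hj, rfl⟩
    exact fill_arm hj ▸ hD.arm_mem hj
  · intro hm
    obtain ⟨j, hj, rfl⟩ := Finset.exists_getD_sort_eq (d := 0) hm
    rw [hD.card_arm] at hj
    exact ⟨j, by omega, fill_arm (by omega)⟩

theorem inLeg_fill_iff (hD : IsThetaData n A L h) : InLeg n (fill n A L h) m ↔ m ∈ L := by
  have hcorner : fill n A L h (0, 0) = L.sort.getD 0 0 := by
    rw [fill_arm (by omega), hD.arm_zero, hD.leg_zero]
  constructor
  · rintro ⟨i, hi, rfl⟩
    rcases Nat.eq_zero_or_pos i with rfl | hi1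
    exacts [hcorner ▸ hD.leg_mem hi, fill_leg hi1 hi ▸ hD.leg_mem hi]
  · intro hm
    obtain ⟨i, hi, rfl⟩ := Finset.exists_getD_sort_eq (d := 0) hm
    rw [hD.card_leg] at hi
    rcases Nat.eq_zero_or_pos i with rfl | hi1
    exacts [⟨0, by omega, hcorner⟩, ⟨i, by omega, fill_leg hi1 (by omega)⟩]

theorem mapsTo_fill (hD : IsThetaData n A L h) :
    Set.MapsTo (fill n A L h) (cells n) (Set.Icc 1 (2 * n + 4)) := by
  intro c hc
  rw [Set.mem_Icc, hD.cover]
  rcases mem_cells_iff.1 hc with ⟨j, hj, rfl⟩ | rfl | ⟨i, hi1, hi, rfl⟩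
  · exact .inl (fill_arm hj ▸ hD.arm_mem hj)
  · exact .inr (.inr fill_heart)
  · exact .inr (.inl (fill_leg hi1 hi ▸ hD.leg_mem hi))

theorem surjOn_fill (hD : IsThetaData n A L h) :
    Set.SurjOn (fill n A L h) (cells n) (Set.Icc 1 (2 * n + 4)) := by
  intro m hm
  rcases (hD.cover m).1 hm with hA | hL | rfl
  · obtain ⟨j, hj, hjm⟩ := hD.inArm_fill_iff.2 hA
    exact ⟨(0, j), arm_mem_cells hj, hjm⟩
  · obtain ⟨i, hi, him⟩ := hD.inLeg_fill_iff.2 hL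
    exact ⟨(i, 0), leg_mem_cells hi, him⟩
  · exact ⟨(1, 1), Or.inr (Or.inl rfl), fill_heart⟩

theorem injOn_fill (hD : IsThetaData n A L h) : Set.InjOn (fill n A L h) (cells n) := by
  have harm : ∀ {j}, j ≤ n + 1 → A.sort.getD j 0 ≠ h := fun hj he =>
    hD.heart_notMem_arm (he ▸ hD.arm_mem hj)
  have hleg : ∀ {i}, i ≤ n + 1 → L.sort.getD i 0 ≠ h := fun hi he =>
    hD.heart_notMem_leg (he ▸ hD.leg_mem hi)
  intro c hc d hd he
  rcases mem_cells_iff.1 hc with ⟨j, hj, rfl⟩ | rfl | ⟨i, hi1, hi, rfl⟩ <;>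
    rcases mem_cells_iff.1 hd with ⟨j', hj', rfl⟩ | rfl | ⟨i', hi1', hi', rfl⟩
  · rw [fill_arm hj, fill_arm hj'] at he
    rw [Finset.eq_of_getD_sort_eq (by rw [hD.card_arm]; omega) (by rw [hD.card_arm]; omega) he]
  · exact absurd (fill_arm hj ▸ he) (harm hj)
  · exact absurd (fill_arm hj ▸ fill_leg hi1' hi' ▸ he) (hD.arm_ne_leg hj hi1' hi')
  · exact absurd (fill_arm hj' ▸ he).symm (harm hj')
  · rfl
  · exact absurd (fill_leg hi1' hi' ▸ he).symm (hleg hi')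
  · exact absurd (fill_arm hj' ▸ fill_leg hi1 hi ▸ he).symm (hD.arm_ne_leg hj' hi1 hi)
  · exact absurd (fill_leg hi1 hi ▸ he) (hleg hi)
  · rw [fill_leg hi1 hi, fill_leg hi1' hi'] at he
    rw [Finset.eq_of_getD_sort_eq (by rw [hD.card_leg]; omega) (by rw [hD.card_leg]; omega) he]

theorem fill_lt_of_row (hD : IsThetaData n A L h) : ∀ c ∈ cells n, ∀ d ∈ cells n,
    c.1 = d.1 → c.2 < d.2 → fill n A L h c < fill n A L h d := by
  intro c hc d hd hrow hcol
  rcases mem_cells_iff.1 hc with ⟨j, hj, rfl⟩ | rfl | ⟨i, hi1, hi, rfl⟩ <;>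
    rcases mem_cells_iff.1 hd with ⟨j', hj', rfl⟩ | rfl | ⟨i', hi1', hi', rfl⟩ <;>
    dsimp only at hrow hcol <;> try omega
  · rw [fill_arm hj, fill_arm hj']
    exact hD.arm_lt hcol hj'
  · subst hrow
    rw [fill_leg le_rfl hi, fill_heart]
    exact hD.leg_one_lt_heart

theorem fill_lt_of_col (hD : IsThetaData n A L h) : ∀ c ∈ cells n, ∀ d ∈ cells n,
    c.2 = d.2 → c.1 < d.1 → fill n A L h c < fill n A L h d := by
  intro c hc d hd hcol hrow
  rcases mem_cells_iff.1 hc with ⟨j, hj, rfl⟩ | rfl | ⟨i, hi1, hi, rfl⟩ <;>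
    rcases mem_cells_iff.1 hd with ⟨j', hj', rfl⟩ | rfl | ⟨i', hi1', hi', rfl⟩ <;>
    dsimp only at hrow hcol <;> try omega
  · subst hcol
    rw [fill_arm hj, fill_heart]
    exact hD.arm_one_lt_heart
  · subst hcol
    rw [fill_arm hj, fill_leg hi1' hi', hD.arm_zero, ← hD.leg_zero]
    exact hD.leg_lt hi1' hi'
  · rw [fill_leg hi1 hi, fill_leg hi1' hi']
    exact hD.leg_lt hrow hi'

theorem isSYT_fill (hD : IsThetaData n A L h) : IsSYT n (fill n A L h) :=
  ⟨fun _ => fill_of_notMem_cells, ⟨hD.mapsTo_fill, hD.injOn_fill, hD.surjOn_fill⟩,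
    hD.fill_lt_of_row, hD.fill_lt_of_col⟩

open Classical in
theorem psi_fill (hD : IsThetaData n A L h) :
    psi n (fill n A L h) = List.ofFn (fun k : Fin (2 * n + 2) =>
      if k.val + 3 ∈ A then Step.E
      else if k.val + 3 ∈ L then Step.N
      else if h = k.val + 3 ∧ 2 ∈ A then Step.S
      else Step.W) := by
  simp only [psi, hD.inArm_fill_iff, hD.inLeg_fill_iff, InHeart, fill_heart]

end IsThetaData

theorem endpt_eq_count (w : List Step) :
    endpt w = ((w.count Step.E : ℤ) - w.count Step.W, (w.count Step.N : ℤ) - w.count Step.S) := by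
  induction w with
  | nil => rfl
  | cons a w ih =>
    simp only [endpt, List.map_cons, List.sum_cons] at ih ⊢
    rw [ih]
    cases a <;> simp [stepVec, Prod.ext_iff] <;> ring

theorem length_eq_count (w : List Step) :
    w.length = w.count Step.N + w.count Step.S + w.count Step.E + w.count Step.W := by
  induction w with
  | nil => rfl
  | cons a w ih => cases a <;> simp [ih] <;> ring

theorem backIdx_eq {w : List Step} {k : ℕ} (hk : k < w.length)
    (hback : w[k] = Step.S ∨ w[k] = Step.W)
    (hfwd : ∀ i (hi : i < k), w[i] = Step.E ∨ w[i] = Step.N) : backIdx w = k + 1 := by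
  have : w.findIdx? (fun s => s == Step.S || s == Step.W) = some k := by
    rw [List.findIdx?_eq_some_iff_getElem]
    refine ⟨hk, by rcases hback with h | h <;> simp [h], fun i hi => ?_⟩
    rcases hfwd i hi with h | h <;> simp [h]
  rw [backIdx, this]

theorem mem_image_add_two_filter_Icc {N m : ℕ} (p : ℕ → Prop) [DecidablePred p] :
    m ∈ ((Finset.Icc 1 N).filter (fun i => p (i - 1))).image (· + 2) ↔
      3 ≤ m ∧ m ≤ N + 2 ∧ p (m - 3) := by
  simp only [Finset.mem_image, Finset.mem_filter, Finset.mem_Icc]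
  constructor
  · rintro ⟨i, ⟨⟨hi1, hiN⟩, hp⟩, rfl⟩
    exact ⟨by omega, by omega, by simpa using hp⟩
  · rintro ⟨hm3, hmN, hp⟩
    exact ⟨m - 2, ⟨⟨by omega, by omega⟩, by rwa [Nat.sub_sub]⟩, by omega⟩

theorem card_insert_one_union_image_add_two (c : Prop) [Decidable c] {s : Finset ℕ} (hs : 0 ∉ s) :
    (insert 1 ((if c then {2} else ∅) ∪ s.image (· + 2))).card =
      1 + (if c then 1 else 0) + s.card := by
  have hdisj : Disjoint (if c then ({2} : Finset ℕ) else ∅) (s.image (· + 2)) := by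
    split_ifs <;> simp [hs]
  rw [Finset.card_insert_of_notMem (by split_ifs <;> simp), Finset.card_union_of_disjoint hdisj,
    Finset.card_image_of_injective _ (add_left_injective 2)]
  split_ifs <;> simp only [Finset.card_singleton, Finset.card_empty] <;> omega

section Vals

variable {n m k : ℕ} {w : List Step}

theorem mem_armVals : m ∈ armVals n w ↔
    m = 1 ∨ (m = 2 ∧ Step.S ∈ w) ∨ (3 ≤ m ∧ m ≤ 2 * n + 4 ∧ w.getD (m - 3) Step.N = Step.E) := by
  rw [armVals, Finset.mem_insert, Finset.mem_union,
    mem_image_add_two_filter_Icc (fun j => w.getD j Step.N = Step.E)]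
  by_cases hS : Step.S ∈ w <;> simp [hS]

theorem mem_legVals : m ∈ legVals n w ↔
    m = 1 ∨ (m = 2 ∧ Step.W ∈ w) ∨ (3 ≤ m ∧ m ≤ 2 * n + 4 ∧ w.getD (m - 3) Step.E = Step.N) := by
  rw [legVals, Finset.mem_insert, Finset.mem_union,
    mem_image_add_two_filter_Icc (fun j => w.getD j Step.E = Step.N)]
  by_cases hW : Step.W ∈ w <;> simp [hW]

theorem bounds_of_mem_armVals (hm : m ∈ armVals n w) : 1 ≤ m ∧ m ≤ 2 * n + 4 := by
  rw [mem_armVals] at hm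
  omega

theorem bounds_of_mem_legVals (hm : m ∈ legVals n w) : 1 ≤ m ∧ m ≤ 2 * n + 4 := by
  rw [mem_legVals] at hm
  omega

theorem add_three_notMem_armVals (hk : k < w.length) (hback : w[k] = Step.S ∨ w[k] = Step.W) :
    k + 3 ∉ armVals n w := by
  rw [mem_armVals, Nat.add_sub_cancel, List.getD_eq_getElem _ _ hk]
  rcases hback with h | h <;> simp [h]

theorem add_three_notMem_legVals (hk : k < w.length) (hback : w[k] = Step.S ∨ w[k] = Step.W) :
    k + 3 ∉ legVals n w := by
  rw [mem_legVals, Nat.add_sub_cancel, List.getD_eq_getElem _ _ hk]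
  rcases hback with h | h <;> simp [h]

end Vals

namespace IsPath

variable {n m i k : ℕ} {w : List Step}

theorem count_eq (hw : IsPath n w) :
    w.count Step.S + w.count Step.W = 1 ∧ w.count Step.E = n + w.count Step.W ∧
      w.count Step.N = n + w.count Step.S := by
  obtain ⟨hlen, -, hend⟩ := hw
  rw [endpt_eq_count, Prod.ext_iff] at hend
  have := length_eq_count w
  omega

theorem count_take_le (hw : IsPath n w) (j : ℕ) :
    (w.take j).count Step.W ≤ (w.take j).count Step.E ∧
      (w.take j).count Step.S ≤ (w.take j).count Step.N := by
  have := hw.2.1 j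
  rw [endpt_eq_count] at this
  omega

theorem exists_backward (hw : IsPath n w) :
    ∃ k, ∃ hk : k < w.length, w[k] = Step.S ∨ w[k] = Step.W := by
  have hpos : 0 < w.count Step.S ∨ 0 < w.count Step.W := by have := hw.count_eq; omega
  rcases hpos with h | h <;> obtain ⟨k, hk, hwk⟩ := List.mem_iff_getElem.1 (List.count_pos_iff.1 h)
  exacts [⟨k, hk, .inl hwk⟩, ⟨k, hk, .inr hwk⟩]

theorem eq_of_backward (hw : IsPath n w) (hi : i < w.length) (hk : k < w.length)
    (hbi : w[i] = Step.S ∨ w[i] = Step.W) (hbk : w[k] = Step.S ∨ w[k] = Step.W) : i = k := by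
  by_contra hne
  have hsub : ({i, k} : Finset ℕ) ⊆ (Finset.range w.length).filter (w.getD · Step.E = Step.S) ∪
      (Finset.range w.length).filter (w.getD · Step.E = Step.W) := by
    intro j hj
    simp only [Finset.mem_insert, Finset.mem_singleton] at hj
    rcases hj with rfl | rfl <;> simp [*]
  have := (Finset.card_le_card hsub).trans (Finset.card_union_le _ _)
  rw [Finset.card_pair hne, List.card_filter_range_getD_eq_count,
    List.card_filter_range_getD_eq_count] at this
  have := hw.count_eq
  omega

theorem exists_N_before (hw : IsPath n w) (hk : k < w.length) (hS : w[k] = Step.S) :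
    ∃ i, ∃ hi : i < k, w[i] = Step.N :=
  List.exists_lt_getElem_eq_of_count_take_le hk (by simp [hS]) (hS ▸ (hw.count_take_le _).2)

theorem exists_E_before (hw : IsPath n w) (hk : k < w.length) (hW : w[k] = Step.W) :
    ∃ i, ∃ hi : i < k, w[i] = Step.E :=
  List.exists_lt_getElem_eq_of_count_take_le hk (by simp [hW]) (hW ▸ (hw.count_take_le _).1)

theorem forward_of_ne (hw : IsPath n w) (hi : i < w.length) (hk : k < w.length)
    (hback : w[k] = Step.S ∨ w[k] = Step.W) (hik : i ≠ k) : w[i] = Step.E ∨ w[i] = Step.N := by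
  have hne : ¬ (w[i] = Step.S ∨ w[i] = Step.W) := fun h => hik (hw.eq_of_backward _ hk h hback)
  revert hne; cases w[i] <;> simp

theorem backIdx_eq (hw : IsPath n w) (hk : k < w.length)
    (hback : w[k] = Step.S ∨ w[k] = Step.W) : backIdx w = k + 1 :=
  _root_.backIdx_eq hk hback fun _ hi => hw.forward_of_ne _ hk hback hi.ne

theorem card_armVals (hw : IsPath n w) : (armVals n w).card = n + 2 := by
  rw [armVals, card_insert_one_union_image_add_two _ (by simp), ← hw.1,
    List.card_filter_Icc_getD_sub_one_eq_count]
  have := hw.count_eq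
  split_ifs with hS
  · have := List.count_pos_iff.2 hS; omega
  · have := List.count_eq_zero.2 hS; omega

theorem card_legVals (hw : IsPath n w) :
    (legVals n w).card = n + 2 := by
  rw [legVals, card_insert_one_union_image_add_two _ (by simp), ← hw.1,
    List.card_filter_Icc_getD_sub_one_eq_count]
  have := hw.count_eq
  split_ifs with hW
  · have := List.count_pos_iff.2 hW; omega
  · have := List.count_eq_zero.2 hW; omega

theorem S_mem_or_W_mem (hw : IsPath n w) : Step.S ∈ w ∨ Step.W ∈ w := by
  obtain ⟨k, hk, hS | hW⟩ := hw.exists_backward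
  exacts [.inl (hS ▸ List.getElem_mem hk), .inr (hW ▸ List.getElem_mem hk)]

theorem W_notMem_of_S_mem (hw : IsPath n w) (hS : Step.S ∈ w) : Step.W ∉ w := by
  intro hW
  have := List.count_pos_iff.2 hS
  have := List.count_pos_iff.2 hW
  have := hw.count_eq
  omega

theorem eq_one_of_mem_armVals_of_mem_legVals (hw : IsPath n w) (hA : m ∈ armVals n w)
    (hL : m ∈ legVals n w) : m = 1 := by
  rw [mem_armVals] at hA
  rw [mem_legVals] at hL
  rcases hA with rfl | ⟨rfl, hS⟩ | ⟨hm3, hm, hE⟩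
  · rfl
  · rcases hL with h | ⟨-, hW⟩ | ⟨h, -⟩
    · omega
    · exact absurd hW (hw.W_notMem_of_S_mem hS)
    · omega
  · rcases hL with rfl | ⟨rfl, -⟩ | ⟨-, -, hN⟩
    · rfl
    · omega
    · rw [List.getD_eq_getElem _ _ (by have := hw.1; omega)] at hE hN
      exact absurd (hE.symm.trans hN) (by simp)

theorem mem_armVals_or_mem_legVals (hw : IsPath n w) (hk : k < w.length)
    (hback : w[k] = Step.S ∨ w[k] = Step.W) (hm1 : 1 ≤ m) (hm : m ≤ 2 * n + 4) :
    m ∈ armVals n w ∨ m ∈ legVals n w ∨ m = k + 3 := by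
  rw [mem_armVals, mem_legVals]
  rcases (by omega : m = 1 ∨ m = 2 ∨ 3 ≤ m) with rfl | rfl | hm3
  · exact .inl (.inl rfl)
  · rcases hw.S_mem_or_W_mem with hS | hW
    exacts [.inl (.inr (.inl ⟨rfl, hS⟩)), .inr (.inl (.inr (.inl ⟨rfl, hW⟩)))]
  · by_cases hmk : m - 3 = k
    · exact .inr (.inr (by omega))
    have hm' : m - 3 < w.length := by have := hw.1; omega
    rw [List.getD_eq_getElem _ _ hm', List.getD_eq_getElem _ _ hm']
    rcases hw.forward_of_ne hm' hk hback hmk with hE | hN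
    exacts [.inl (.inr (.inr ⟨hm3, hm, hE⟩)), .inr (.inl (.inr (.inr ⟨hm3, hm, hN⟩)))]

theorem exists_mem_armVals_lt (hw : IsPath n w) (hk : k < w.length)
    (hback : w[k] = Step.S ∨ w[k] = Step.W) : ∃ x ∈ armVals n w, 1 < x ∧ x < k + 3 := by
  rcases hback with hS | hW
  · exact ⟨2, mem_armVals.2 (.inr (.inl ⟨rfl, hS ▸ List.getElem_mem hk⟩)), by omega, by omega⟩
  · obtain ⟨i, hi, hE⟩ := hw.exists_E_before hk hW
    refine ⟨i + 3, mem_armVals.2 (.inr (.inr ⟨by omega, by have := hw.1; omega, ?_⟩)), by omega,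
      by omega⟩
    rwa [Nat.add_sub_cancel, List.getD_eq_getElem _ _ (by omega)]

theorem exists_mem_legVals_lt (hw : IsPath n w) (hk : k < w.length)
    (hback : w[k] = Step.S ∨ w[k] = Step.W) : ∃ y ∈ legVals n w, 1 < y ∧ y < k + 3 := by
  rcases hback with hS | hW
  · obtain ⟨i, hi, hN⟩ := hw.exists_N_before hk hS
    refine ⟨i + 3, mem_legVals.2 (.inr (.inr ⟨by omega, by have := hw.1; omega, ?_⟩)), by omega,
      by omega⟩
    rwa [Nat.add_sub_cancel, List.getD_eq_getElem _ _ (by omega)]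
  · exact ⟨2, mem_legVals.2 (.inr (.inl ⟨rfl, hW ▸ List.getElem_mem hk⟩)), by omega, by omega⟩

theorem isThetaData (hw : IsPath n w) :
    IsThetaData n (armVals n w) (legVals n w) (backIdx w + 2) := by
  obtain ⟨k, hk, hback⟩ := hw.exists_backward
  rw [hw.backIdx_eq hk hback]
  refine ⟨hw.card_armVals, hw.card_legVals, mem_armVals.2 (.inl rfl), mem_legVals.2 (.inl rfl),
    fun m => ⟨fun hm => hw.mem_armVals_or_mem_legVals hk hback hm.1 hm.2, ?_⟩,
    fun m => hw.eq_one_of_mem_armVals_of_mem_legVals, add_three_notMem_armVals hk hback,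
    add_three_notMem_legVals hk hback, hw.exists_mem_armVals_lt hk hback,
    hw.exists_mem_legVals_lt hk hback⟩
  rintro (hA | hL | rfl)
  exacts [bounds_of_mem_armVals hA, bounds_of_mem_legVals hL, by have := hw.1; omega]

theorem psi_phi (hw : IsPath n w) : psi n (phi n w) = w := by
  obtain ⟨k, hk, hback⟩ := hw.exists_backward
  rw [phi_eq_fill, hw.isThetaData.psi_fill, hw.backIdx_eq hk hback]
  refine List.ext_getElem (by simp [hw.1]) fun i _ hi => ?_
  have hi3 : i + 3 ≤ 2 * n + 4 := by have := hw.1; omega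
  simp only [List.getElem_ofFn, mem_armVals, mem_legVals, Nat.add_sub_cancel,
    List.getD_eq_getElem _ _ hi]
  by_cases hik : i = k
  · subst hik
    rcases hback with hS | hW
    · have hmem : Step.S ∈ w := hS ▸ List.getElem_mem hi
      simp [hS, hmem]
    · have hS : Step.S ∉ w := fun hS => hw.W_notMem_of_S_mem hS (hW ▸ List.getElem_mem hk)
      simp [hW, hS]
  · rcases hw.forward_of_ne hi hk hback hik with hE | hN
    · simp [hE, hi3]
    · simp [hN, hi3]

end IsPath

def armEntries (n : ℕ) (T : ℕ × ℕ → ℕ) : Finset ℕ :=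
  Finset.univ.image fun j : Fin (n + 2) => T (0, j)

def legEntries (n : ℕ) (T : ℕ × ℕ → ℕ) : Finset ℕ :=
  Finset.univ.image fun i : Fin (n + 2) => T (i, 0)

section Entries

variable {n m : ℕ} {T : ℕ × ℕ → ℕ}

theorem mem_armEntries : m ∈ armEntries n T ↔ InArm n T m := by
  simp [armEntries, InArm, Fin.exists_iff, Nat.lt_succ_iff]

theorem mem_legEntries : m ∈ legEntries n T ↔ InLeg n T m := by
  simp [legEntries, InLeg, Fin.exists_iff, Nat.lt_succ_iff]

end Entries

namespace IsSYT

variable {n m : ℕ} {T : ℕ × ℕ → ℕ}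

theorem arm_strictMono (hT : IsSYT n T) : StrictMono fun j : Fin (n + 2) => T (0, (j : ℕ)) :=
  fun i j hij => hT.2.2.1 _ (arm_mem_cells (by omega)) _ (arm_mem_cells (by omega)) rfl hij

theorem leg_strictMono (hT : IsSYT n T) : StrictMono fun i : Fin (n + 2) => T ((i : ℕ), 0) :=
  fun i j hij => hT.2.2.2 _ (leg_mem_cells (by omega)) _ (leg_mem_cells (by omega)) rfl hij

theorem fill_eq (hT : IsSYT n T) : fill n (armEntries n T) (legEntries n T) (T (1, 1)) = T := by
  have hA : (armEntries n T).card = n + 2 := by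
    rw [armEntries, Finset.card_image_of_injective _ hT.arm_strictMono.injective, Finset.card_fin]
  have hL : (legEntries n T).card = n + 2 := by
    rw [legEntries, Finset.card_image_of_injective _ hT.leg_strictMono.injective, Finset.card_fin]
  funext c
  by_cases hc : c ∈ cells n
  · rcases mem_cells_iff.1 hc with ⟨j, hj, rfl⟩ | rfl | ⟨i, hi1, hi, rfl⟩
    · rw [fill_arm hj]
      exact Finset.getD_sort_eq_of_strictMono hT.arm_strictMono
        (fun j => mem_armEntries.2 ⟨j, by omega, rfl⟩) hA ⟨j, by omega⟩
    · exact fill_heart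
    · rw [fill_leg hi1 hi]
      exact Finset.getD_sort_eq_of_strictMono hT.leg_strictMono
        (fun i => mem_legEntries.2 ⟨i, by omega, rfl⟩) hL ⟨i, by omega⟩
  · rw [fill_of_notMem_cells hc, hT.1 c hc]

theorem corner_lt (hT : IsSYT n T) {c : ℕ × ℕ} (hc : c ∈ cells n) (hne : c ≠ (0, 0)) :
    T (0, 0) < T c := by
  have h00 := arm_mem_cells (n := n) (Nat.zero_le _)
  rcases mem_cells_iff.1 hc with ⟨j, hj, rfl⟩ | rfl | ⟨i, hi1, hi, rfl⟩
  · exact hT.2.2.1 _ h00 _ hc rfl (Nat.pos_of_ne_zero fun h => hne (by simp_all))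
  · have h01 := arm_mem_cells (n := n) (j := 1) (by omega)
    exact (hT.2.2.1 _ h00 _ h01 rfl one_pos).trans (hT.2.2.2 _ h01 _ hc rfl one_pos)
  · exact hT.2.2.2 _ h00 _ hc rfl hi1

theorem corner_eq_one (hT : IsSYT n T) : T (0, 0) = 1 := by
  obtain ⟨c, hc, hc1⟩ := hT.2.1.2.2 (Set.mem_Icc.2 ⟨le_rfl, by omega⟩ : 1 ∈ Set.Icc 1 (2 * n + 4))
  have h00 := (hT.2.1.1 (arm_mem_cells (n := n) (Nat.zero_le _))).1
  by_contra hne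
  have := hT.corner_lt hc fun h => hne (h ▸ hc1)
  omega

theorem bounds_of_inArm (hT : IsSYT n T) (hm : InArm n T m) : 1 ≤ m ∧ m ≤ 2 * n + 4 := by
  obtain ⟨j, hj, rfl⟩ := hm
  exact hT.2.1.1 (arm_mem_cells hj)

theorem bounds_of_inLeg (hT : IsSYT n T) (hm : InLeg n T m) : 1 ≤ m ∧ m ≤ 2 * n + 4 := by
  obtain ⟨i, hi, rfl⟩ := hm
  exact hT.2.1.1 (leg_mem_cells hi)

theorem heart_bounds (hT : IsSYT n T) : 3 ≤ T (1, 1) ∧ T (1, 1) ≤ 2 * n + 4 := by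
  have h01 := arm_mem_cells (n := n) (j := 1) (by omega)
  have hheart : (1, 1) ∈ cells n := Or.inr (Or.inl rfl)
  have := hT.corner_lt h01 (by simp)
  have := hT.2.2.2 _ h01 _ hheart rfl one_pos
  have := hT.corner_eq_one
  have := (hT.2.1.1 hheart).2
  omega

theorem eq_one_of_inArm_of_inLeg (hT : IsSYT n T) (hA : InArm n T m) (hL : InLeg n T m) :
    m = 1 := by
  obtain ⟨j, hj, rfl⟩ := hA
  obtain ⟨i, hi, hij⟩ := hL
  have := hT.2.1.2.1 (leg_mem_cells hi) (arm_mem_cells hj) hij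
  obtain ⟨rfl, rfl⟩ := Prod.mk.inj this
  exact hT.corner_eq_one

theorem not_inArm_heart (hT : IsSYT n T) : ¬ InArm n T (T (1, 1)) := by
  rintro ⟨j, hj, hj11⟩
  have := hT.2.1.2.1 (arm_mem_cells hj) (Or.inr (Or.inl rfl)) hj11
  simp at this

theorem not_inLeg_heart (hT : IsSYT n T) : ¬ InLeg n T (T (1, 1)) := by
  rintro ⟨i, hi, hi11⟩
  have := hT.2.1.2.1 (leg_mem_cells hi) (Or.inr (Or.inl rfl)) hi11
  simp at this

theorem inArm_or_inLeg_or_eq_heart (hT : IsSYT n T) (hm1 : 1 ≤ m) (hm : m ≤ 2 * n + 4) :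
    InArm n T m ∨ InLeg n T m ∨ m = T (1, 1) := by
  obtain ⟨c, hc, rfl⟩ := hT.2.1.2.2 (Set.mem_Icc.2 ⟨hm1, hm⟩)
  rcases mem_cells_iff.1 hc with ⟨j, hj, rfl⟩ | rfl | ⟨i, hi1, hi, rfl⟩
  exacts [.inl ⟨j, hj, rfl⟩, .inr (.inr rfl), .inr (.inl ⟨i, hi, rfl⟩)]

end IsSYT

open Classical in
noncomputable def psiLetter (n : ℕ) (T : ℕ × ℕ → ℕ) (m : ℕ) : Step :=
  if InArm n T m then Step.E
  else if InLeg n T m then Step.N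
  else if InHeart T m ∧ InArm n T 2 then Step.S
  else Step.W

section PsiLetter

variable {n m : ℕ} {T : ℕ × ℕ → ℕ}

theorem length_psi : (psi n T).length = 2 * n + 2 := List.length_ofFn

theorem psi_getElem {k : ℕ} (hk : k < (psi n T).length) : (psi n T)[k] = psiLetter n T (k + 3) := by
  simp only [psi, List.getElem_ofFn, psiLetter]

theorem psi_getD (hm3 : 3 ≤ m) (hm : m ≤ 2 * n + 4) (d : Step) :
    (psi n T).getD (m - 3) d = psiLetter n T m := by
  rw [List.getD_eq_getElem _ _ (by rw [length_psi]; omega), psi_getElem, Nat.sub_add_cancel hm3]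

theorem mem_psi_iff {s : Step} :
    s ∈ psi n T ↔ ∃ m, 3 ≤ m ∧ m ≤ 2 * n + 4 ∧ psiLetter n T m = s := by
  simp only [psi, List.mem_ofFn, Fin.exists_iff, psiLetter]
  constructor
  · rintro ⟨k, hk, rfl⟩
    exact ⟨k + 3, by omega, by omega, rfl⟩
  · rintro ⟨m, hm3, hm, rfl⟩
    exact ⟨m - 3, by omega, by rw [Nat.sub_add_cancel hm3]⟩

theorem psiLetter_eq_E_iff : psiLetter n T m = Step.E ↔ InArm n T m := by
  unfold psiLetter; split_ifs <;> simp [*]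

theorem IsSYT.psiLetter_eq_N_iff (hT : IsSYT n T) (hm : 2 ≤ m) :
    psiLetter n T m = Step.N ↔ InLeg n T m := by
  unfold psiLetter
  by_cases hA : InArm n T m
  · simp only [hA, if_true, reduceCtorEq, false_iff]
    intro hL
    have := hT.eq_one_of_inArm_of_inLeg hA hL
    omega
  · simp only [hA, if_false]
    split_ifs <;> simp [*]

open Classical in
theorem IsSYT.psiLetter_heart (hT : IsSYT n T) :
    psiLetter n T (T (1, 1)) = if InArm n T 2 then Step.S else Step.W := by
  simp [psiLetter, hT.not_inArm_heart, hT.not_inLeg_heart, InHeart]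

theorem IsSYT.psiLetter_eq_E_or_eq_N (hT : IsSYT n T) (hm1 : 1 ≤ m) (hm : m ≤ 2 * n + 4)
    (hne : m ≠ T (1, 1)) : psiLetter n T m = Step.E ∨ psiLetter n T m = Step.N := by
  rcases hT.inArm_or_inLeg_or_eq_heart hm1 hm with hA | hL | rfl
  · simp [psiLetter, hA]
  · simp [psiLetter, hL, em]
  · exact absurd rfl hne

end PsiLetter

namespace IsSYT

variable {n : ℕ} {T : ℕ × ℕ → ℕ}

theorem S_mem_psi_iff (hT : IsSYT n T) : Step.S ∈ psi n T ↔ InArm n T 2 := by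
  rw [mem_psi_iff]
  constructor
  · rintro ⟨m, -, -, hS⟩
    unfold psiLetter at hS
    split_ifs at hS with h1 h2 h3
    exact h3.2
  · intro h2
    have := hT.heart_bounds
    exact ⟨T (1, 1), this.1, this.2, by rw [hT.psiLetter_heart, if_pos h2]⟩

theorem W_mem_psi_iff (hT : IsSYT n T) : Step.W ∈ psi n T ↔ InLeg n T 2 := by
  have hb := hT.heart_bounds
  rw [mem_psi_iff]
  constructor
  · rintro ⟨m, hm3, hm, hW⟩
    have hm11 : m = T (1, 1) := by
      by_contra hne
      rcases hT.psiLetter_eq_E_or_eq_N (by omega) hm hne with h | h <;> simp [h] at hW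
    subst hm11
    rw [hT.psiLetter_heart] at hW
    split_ifs at hW with h2
    rcases hT.inArm_or_inLeg_or_eq_heart (m := 2) (by omega) (by omega) with hA | hL | h
    exacts [absurd hA h2, hL, by omega]
  · intro hL2
    have h2 : ¬ InArm n T 2 := fun hA2 => by have := hT.eq_one_of_inArm_of_inLeg hA2 hL2; omega
    exact ⟨T (1, 1), hb.1, hb.2, by rw [hT.psiLetter_heart, if_neg h2]⟩

theorem backIdx_psi (hT : IsSYT n T) : backIdx (psi n T) + 2 = T (1, 1) := by
  have hb := hT.heart_bounds
  have hk : T (1, 1) - 3 < (psi n T).length := by rw [length_psi]; omega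
  suffices backIdx (psi n T) = T (1, 1) - 3 + 1 by omega
  refine backIdx_eq hk ?_ fun i hi => ?_
  · rw [psi_getElem, Nat.sub_add_cancel hb.1, hT.psiLetter_heart]
    split_ifs <;> simp
  · rw [psi_getElem]
    exact hT.psiLetter_eq_E_or_eq_N (by omega) (by omega) (by omega)

theorem armVals_psi (hT : IsSYT n T) : armVals n (psi n T) = armEntries n T := by
  ext m
  rw [mem_armVals, mem_armEntries]
  constructor
  · rintro (rfl | ⟨rfl, hS⟩ | ⟨hm3, hm, hE⟩)
    · exact ⟨0, by omega, hT.corner_eq_one⟩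
    · exact hT.S_mem_psi_iff.1 hS
    · exact psiLetter_eq_E_iff.1 (psi_getD hm3 hm _ ▸ hE)
  · intro hA
    have hb := hT.bounds_of_inArm hA
    rcases (by omega : m = 1 ∨ m = 2 ∨ 3 ≤ m) with rfl | rfl | hm3
    · exact .inl rfl
    · exact .inr (.inl ⟨rfl, hT.S_mem_psi_iff.2 hA⟩)
    · exact .inr (.inr ⟨hm3, hb.2, by rw [psi_getD hm3 hb.2, psiLetter_eq_E_iff.2 hA]⟩)

theorem legVals_psi (hT : IsSYT n T) : legVals n (psi n T) = legEntries n T := by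
  ext m
  rw [mem_legVals, mem_legEntries]
  constructor
  · rintro (rfl | ⟨rfl, hW⟩ | ⟨hm3, hm, hN⟩)
    · exact ⟨0, by omega, hT.corner_eq_one⟩
    · exact hT.W_mem_psi_iff.1 hW
    · exact (hT.psiLetter_eq_N_iff (by omega)).1 (psi_getD hm3 hm _ ▸ hN)
  · intro hL
    have hb := hT.bounds_of_inLeg hL
    rcases (by omega : m = 1 ∨ m = 2 ∨ 3 ≤ m) with rfl | rfl | hm3
    · exact .inl rfl
    · exact .inr (.inl ⟨rfl, hT.W_mem_psi_iff.2 hL⟩)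
    · exact .inr (.inr ⟨hm3, hb.2, by
        rw [psi_getD hm3 hb.2, (hT.psiLetter_eq_N_iff (by omega)).2 hL]⟩)

theorem phi_psi (hT : IsSYT n T) : phi n (psi n T) = T := by
  rw [phi_eq_fill, hT.armVals_psi, hT.legVals_psi, hT.backIdx_psi, hT.fill_eq]

end IsSYT

/-- For every lattice path `w ∈ 𝒫ₙ`, the filling `φ(w)` is a standard
Young tableau of shape `θ⁽ⁿ⁾`; moreover `φ` is a two-sided inverse of `ψ`. -/
theorem phi_wellDefined_and_inverse (n : ℕ) :
    (∀ w : List Step, IsPath n w → IsSYT n (phi n w)) ∧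
    (∀ w : List Step, IsPath n w → psi n (phi n w) = w) ∧
    (∀ T : ℕ × ℕ → ℕ, IsSYT n T → phi n (psi n T) = T) :=
  ⟨fun w hw => phi_eq_fill n w ▸ hw.isThetaData.isSYT_fill, fun _ hw => hw.psi_phi,
    fun _ hT => hT.phi_psi⟩
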